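/- arXiv:1011.4678 — 2 statements merged into one kernel-verified Lean document; each statement's English description precedes it below -/
import Mathlib

section
/- Let Γ be a group admitting an epimorphism φ : Γ → H onto a finitely generated free abelian group H such that ker(φ) is a finite p-group P. Then there exists a finite index subgroup F ≤ H and an injective group homomorphism Ψ : F × P → Γ such that: (1) Ψ restricted to P is the inclusion of P = ker(φ) into Γ; (2) the composition F → F × P → Γ → H maps F isomorphically onto F ⊆ H; and (3) the image of Ψ is a finite index normal subgroup of Γ. -/
/-!
The centralizer `C` of the finite normal subgroup `P = ker φ` has finite index `d`. Lift a basis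
`bᵢ` of `H` to `γᵢ ∈ Γ` and put `aᵢ = γᵢ ^ d ∈ C`. As `H` is abelian, `⁅aᵢ, aⱼ⁆` lies in `P`, hence
commutes with `aᵢ` and has order dividing `|P|`; so the elements `tᵢ = aᵢ ^ |P|` commute pairwise
and centralize `P`. They define `s₀ : H →* Γ` with `φ ∘ s₀ = (· ^ n)`, `n = d * |P|`. Since `H` is
torsion free and finitely generated, `F = Hⁿ` has finite index and `s₀ ∘ (· ^ n)⁻¹` is a section of
`φ` over `F` centralizing `P`; then `Ψ (f, x) = s f * x` is injective with image `φ⁻¹ F`.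
-/

open Subgroup Finsupp
open scoped commutatorElement IsMulCommutative

section Commutation

variable {G : Type*}

theorem SemiconjBy.pow_left_of_commute [Monoid G] {a b c : G} (h : SemiconjBy a b (c * b))
    (hc : Commute a c) (k : ℕ) : SemiconjBy (a ^ k) b (c ^ k * b) := by
  induction k with
  | zero => simp
  | succ k ih =>
    rw [pow_succ', pow_succ']
    calc a * a ^ k * b = a * (c ^ k * b) * a ^ k := by rw [mul_assoc, ih.eq, ← mul_assoc]
      _ = c ^ k * (a * b) * a ^ k := by rw [← mul_assoc, ← mul_assoc, (hc.pow_right k).eq]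
      _ = c * c ^ k * b * (a * a ^ k) := by
        rw [h.eq, (Commute.self_pow c k).eq]; simp only [mul_assoc]

theorem commute_pow_card_of_commutatorElement_mem [Group G] {N : Subgroup G} [Finite N] {a b : G}
    (ha : a ∈ centralizer (N : Set G)) (hab : ⁅a, b⁆ ∈ N) : Commute (a ^ Nat.card N) b := by
  have hsemi : SemiconjBy a b (⁅a, b⁆ * b) := by
    simp only [SemiconjBy, commutatorElement_def]; group
  have hc : Commute a ⁅a, b⁆ := (mem_centralizer_iff.mp ha _ hab).symm
  have hpow : ⁅a, b⁆ ^ Nat.card N = 1 :=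
    congrArg Subtype.val (pow_card_eq_one' (x := (⟨_, hab⟩ : N)))
  have := hsemi.pow_left_of_commute hc (Nat.card N)
  rwa [hpow, one_mul] at this

theorem Subgroup.centralizer_eq_ker_conjNormal [Group G] (N : Subgroup G) [N.Normal] :
    centralizer (N : Set G) = (MulAut.conjNormal (H := N)).ker := by
  ext g
  simp [mem_centralizer_iff, MulEquiv.ext_iff, Subtype.ext_iff, eq_mul_inv_iff_mul_eq, eq_comm]

instance Subgroup.finiteIndex_centralizer [Group G] (N : Subgroup G) [N.Normal] [Finite N] :
    (centralizer (N : Set G)).FiniteIndex := by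
  rw [centralizer_eq_ker_conjNormal]; infer_instance

end Commutation

section FreeAbelian

variable {ι G : Type*} [Group G]

theorem Finsupp.monoidHom_ext_int {f g : Multiplicative (ι →₀ ℤ) →* G}
    (h : ∀ i, f (.ofAdd (single i 1)) = g (.ofAdd (single i 1))) : f = g :=
  AddMonoidHom.toMultiplicativeLeft.symm.injective <|
    Finsupp.addHom_ext' fun i => AddMonoidHom.ext_int (h i)

theorem Finsupp.exists_monoidHom_int_of_commute (g : ι → G) (hg : ∀ i j, Commute (g i) (g j)) :
    ∃ f : Multiplicative (ι →₀ ℤ) →* G,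
      (∀ i, f (.ofAdd (single i 1)) = g i) ∧ ∀ x, f x ∈ closure (Set.range g) := by
  let K := closure (Set.range g)
  have : IsMulCommutative K := isMulCommutative_closure <| by
    rintro _ ⟨i, rfl⟩ _ ⟨j, rfl⟩; exact hg i j
  let f : Multiplicative (ι →₀ ℤ) →* K := AddMonoidHom.toMultiplicativeLeft <|
    liftAddHom fun i => zmultiplesHom _ (.ofMul ⟨g i, subset_closure ⟨i, rfl⟩⟩)
  refine ⟨K.subtype.comp f, fun i => ?_, fun x => (f x).2⟩
  simp [f]

end FreeAbelian

theorem Subgroup.finiteIndex_range_powMonoidHom {G : Type*} [CommGroup G] [Group.FG G] {n : ℕ}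
    (hn : n ≠ 0) : (powMonoidHom n : G →* G).range.FiniteIndex := by
  have hexp : IsMulTorsion (G ⧸ (powMonoidHom n : G →* G).range) := by
    rintro ⟨g⟩
    exact isOfFinOrder_iff_pow_eq_one.mpr
      ⟨n, Nat.pos_of_ne_zero hn, (QuotientGroup.eq_one_iff _).mpr ⟨g, rfl⟩⟩
  have := CommGroup.finite_of_fg_isMulTorsion _ hexp
  exact finiteIndex_of_finite_quotient

section Splitting

variable {Γ H : Type*} [Group Γ] [Group H] {φ : Γ →* H} {F : Subgroup H} {s : F →* Γ}

theorem MonoidHom.injective_noncommCoprod_ker_subtype (hs : ∀ f, φ (s f) = f)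
    (hcomm : ∀ f x, Commute (s f) (φ.ker.subtype x)) :
    Function.Injective (s.noncommCoprod φ.ker.subtype hcomm) := by
  refine (injective_iff_map_eq_one _).mpr fun ⟨f, x⟩ hfx => ?_
  simp only [noncommCoprod_apply, Subgroup.coe_subtype] at hfx
  have hf : f = 1 := Subtype.ext <| by
    simpa [hs, mem_ker.mp x.2] using congrArg φ hfx
  subst hf
  exact Prod.ext rfl (Subtype.ext <| by simpa using hfx)

theorem MonoidHom.range_noncommCoprod_ker_subtype (hs : ∀ f, φ (s f) = f)
    (hcomm : ∀ f x, Commute (s f) (φ.ker.subtype x)) :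
    (s.noncommCoprod φ.ker.subtype hcomm).range = F.comap φ := by
  ext g
  constructor
  · rintro ⟨⟨f, x⟩, rfl⟩
    simp [hs, mem_ker.mp x.2]
  · intro hg
    have hx : (s ⟨φ g, hg⟩)⁻¹ * g ∈ φ.ker := by simp [hs]
    exact ⟨(⟨φ g, hg⟩, ⟨_, hx⟩), by simp⟩

end Splitting

theorem exists_pow_lift_mem_centralizer_ker {Γ H ι : Type*} [Group Γ] [CommGroup H]
    (e : H ≃* Multiplicative (ι →₀ ℤ)) (φ : Γ →* H) (hφ : Function.Surjective φ) [Finite φ.ker] :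
    ∃ n ≠ 0, ∃ s₀ : H →* Γ, (∀ h, φ (s₀ h) = h ^ n) ∧ ∀ h, s₀ h ∈ centralizer (φ.ker : Set Γ) := by
  set C := centralizer (φ.ker : Set Γ)
  set m := Nat.card φ.ker
  choose γ hγ using fun i => hφ (e.symm (.ofAdd (single i 1)))
  have ha : ∀ i, γ i ^ C.index ∈ C := fun i => C.pow_index_mem _
  have hcomm : ∀ i j, Commute ((γ i ^ C.index) ^ m) ((γ j ^ C.index) ^ m) := fun i j =>
    (commute_pow_card_of_commutatorElement_mem (ha i) <| by
      rw [MonoidHom.mem_ker, map_commutatorElement, commutatorElement_eq_one_iff_commute]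
      exact Commute.all _ _).pow_right m
  obtain ⟨f, hfb, hfC⟩ := exists_monoidHom_int_of_commute _ hcomm
  have hφf : φ.comp f = (powMonoidHom (C.index * m)).comp e.symm.toMonoidHom :=
    monoidHom_ext_int fun i => by simp [hfb, hγ, pow_mul]
  refine ⟨C.index * m, Nat.mul_ne_zero FiniteIndex.index_ne_zero Nat.card_pos.ne',
    f.comp e.toMonoidHom, fun h => by simpa using DFunLike.congr_fun hφf (e h), fun h => ?_⟩
  refine closure_le _ |>.mpr ?_ (hfC (e h))
  rintro _ ⟨i, rfl⟩
  exact C.pow_mem (ha i) m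

theorem exists_finiteIndex_section_of_comp_eq_pow {Γ H : Type*} [Group Γ] [CommGroup H]
    [Group.FG H] [IsMulTorsionFree H] (φ : Γ →* H) {n : ℕ} (hn : n ≠ 0) (s₀ : H →* Γ)
    (hs₀ : ∀ h, φ (s₀ h) = h ^ n) :
    ∃ (F : Subgroup H) (s : F →* Γ), F.FiniteIndex ∧ (∀ f, φ (s f) = f) ∧ ∀ f, s f ∈ s₀.range := by
  have hpow : φ.comp s₀ = powMonoidHom n := MonoidHom.ext hs₀
  have hinj : Function.Injective (φ.comp s₀) := hpow ▸ pow_left_injective hn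
  refine ⟨(φ.comp s₀).range, s₀.comp (MonoidHom.ofInjective hinj).symm.toMonoidHom,
    hpow ▸ finiteIndex_range_powMonoidHom hn, MonoidHom.apply_ofInjective_symm hinj,
    fun f => ⟨_, rfl⟩⟩

theorem stmt_6_general (Γ : Type) [Group Γ]
    (H : Type) [CommGroup H] (hfree : ∃ r : ℕ, Nonempty (H ≃* Multiplicative (Fin r →₀ ℤ)))
    (φ : Γ →* H) (hsurj : Function.Surjective φ)
    [Finite φ.ker] :
    ∃ (F : Subgroup H) (Ψ : (F × φ.ker) →* Γ),
      F.index ≠ 0 ∧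
      Function.Injective Ψ ∧
      (∀ x : φ.ker, Ψ (1, x) = (x : Γ)) ∧
      (∀ f : F, φ (Ψ (f, 1)) = (f : H)) ∧
      Ψ.range.Normal ∧ Ψ.range.index ≠ 0 := by
  obtain ⟨r, ⟨e⟩⟩ := hfree
  have : AddGroup.FG (Fin r →₀ ℤ) := Module.Finite.iff_addGroup_fg.mp inferInstance
  have : Group.FG H := Group.fg_of_surjective (f := e.symm.toMonoidHom) e.symm.surjective
  have : IsMulTorsionFree H := Function.Injective.isMulTorsionFree e.toMonoidHom e.injective
  obtain ⟨n, hn, s₀, hs₀, hs₀C⟩ := exists_pow_lift_mem_centralizer_ker e φ hsurj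
  obtain ⟨F, s, hF, hs, hsr⟩ := exists_finiteIndex_section_of_comp_eq_pow φ hn s₀ hs₀
  have hcomm : ∀ f x, Commute (s f) (φ.ker.subtype x) := fun f x => by
    obtain ⟨h, hh⟩ := hsr f
    exact hh ▸ (mem_centralizer_iff.mp (hs₀C h) x x.2).symm
  have hrange := MonoidHom.range_noncommCoprod_ker_subtype hs hcomm
  refine ⟨F, s.noncommCoprod φ.ker.subtype hcomm, hF.index_ne_zero,
    MonoidHom.injective_noncommCoprod_ker_subtype hs hcomm, fun x => by simp,
    fun f => by simp [hs], hrange ▸ (inferInstance : F.Normal).comap φ, ?_⟩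
  rw [hrange, index_comap_of_surjective _ hsurj]
  exact hF.index_ne_zero

/-- Splitting lemma: if `φ : Γ → H` is an epimorphism onto a finitely generated free
abelian group whose kernel `P` is a finite `p`-group, then there is a finite index
subgroup `F ≤ H` and an injective homomorphism `Ψ : F × P → Γ` which is the inclusion
on `P`, such that `φ ∘ Ψ` is the identity on `F`, and whose image is a finite index
normal subgroup of `Γ`. -/
theorem stmt_6 (p : ℕ) (hp : p.Prime) (Γ : Type) [Group Γ]
    (H : Type) [CommGroup H] (hfree : ∃ r : ℕ, Nonempty (H ≃* Multiplicative (Fin r →₀ ℤ)))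
    (φ : Γ →* H) (hsurj : Function.Surjective φ)
    [Finite φ.ker] (hker : ∃ n : ℕ, Nat.card φ.ker = p ^ n) :
    ∃ (F : Subgroup H) (Ψ : (F × φ.ker) →* Γ),
      F.index ≠ 0 ∧
      Function.Injective Ψ ∧
      (∀ x : φ.ker, Ψ (1, x) = (x : Γ)) ∧
      (∀ f : F, φ (Ψ (f, 1)) = (f : H)) ∧
      Ψ.range.Normal ∧ Ψ.range.index ≠ 0 :=
  stmt_6_general Γ H hfree φ hsurj
end

section
/- Let R be a ring, let C_* be a bounded chain complex of finitely generated free left R-modules, and let ε : R → S be a surjective ring homomorphism such that the chain complex S ⊗_R C_* is contractible. Then there exists a chain map f : C_* → C_* which is chain homotopic to the zero map and such that ε(f) = id on S ⊗_R C_*; explicitly, any chain contraction γ of S ⊗_R C_* lifts to maps γ̃_i : C_i → C_{i+1}, and f = dγ̃ + γ̃d is a chain map with S ⊗_R f equal to the identity. -/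
/-- For any ideal `I` of `R`, a linear map carries `I·M` into `I·N`. -/
theorem ideal_smul_top_le_comap {R : Type} [Ring R] (I : Ideal R)
    {M N : Type} [AddCommGroup M] [AddCommGroup N] [Module R M] [Module R N]
    (f : M →ₗ[R] N) :
    I • (⊤ : Submodule R M) ≤ (I • (⊤ : Submodule R N)).comap f :=
  Submodule.smul_le.mpr fun r hr m _ => Submodule.mem_comap.mpr
    (by rw [map_smul]; exact Submodule.smul_mem_smul hr Submodule.mem_top)

/-- Let `ε : R → S` be a surjective ring homomorphism and let `(C_*, d)` be a bounded
chain complex of finitely generated free left `R`-modules.  The complex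
`S ⊗_R C_*` is realised as the quotient complex `C̄_i = C_i/(ker ε)·C_i`.  If `S ⊗_R C_*`
is contractible, witnessed by a chain contraction `γ` (`d̄γ + γd̄ = id`), then `γ` lifts
to maps `γ̃_i : C_i → C_{i+1}`, and `f := dγ̃ + γ̃d` (which is by construction chain
homotopic to zero via `γ̃`) is a chain map `C_* → C_*` inducing the identity on
`S ⊗_R C_*`. -/
theorem stmt_16 (R S : Type) [Ring R] [Ring S] (ε : R →+* S)
    (hε : Function.Surjective ε)
    (n : ℕ) (C : ℤ → Type)
    [∀ i, AddCommGroup (C i)] [∀ i, Module R (C i)]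
    [∀ i, Module.Free R (C i)] [∀ i, Module.Finite R (C i)]
    (hbounded : ∀ i : ℤ, (i < 0 ∨ (n : ℤ) < i) → Subsingleton (C i))
    (d : ∀ i : ℤ, C (i + 1) →ₗ[R] C i)
    (hdd : ∀ i : ℤ, (d i).comp (d (i + 1)) = 0)
    -- the quotient complex `S ⊗_R C_* = C_*/(ker ε)C_*` and its differential
    (Cbar : ∀ i : ℤ, Type)
    (hCbar : ∀ i, Cbar i = (C i ⧸ (RingHom.ker ε • (⊤ : Submodule R (C i)))))
    -- a chain contraction of the quotient complex
    (γ : ∀ i : ℤ, (C i ⧸ (RingHom.ker ε • (⊤ : Submodule R (C i)))) →ₗ[R]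
        (C (i + 1) ⧸ (RingHom.ker ε • (⊤ : Submodule R (C (i + 1))))))
    (hγ : ∀ (i : ℤ) (x : C (i + 1) ⧸ (RingHom.ker ε • (⊤ : Submodule R (C (i + 1))))),
      (Submodule.mapQ _ _ (d (i + 1)) (ideal_smul_top_le_comap (RingHom.ker ε) (d (i + 1))))
          (γ (i + 1) x)
        + γ i ((Submodule.mapQ _ _ (d i) (ideal_smul_top_le_comap (RingHom.ker ε) (d i))) x)
        = x) :
    ∃ γt : ∀ i : ℤ, C i →ₗ[R] C (i + 1),
      -- `γ̃` lifts `γ`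
      (∀ (i : ℤ) (x : C i),
        Submodule.mkQ (RingHom.ker ε • (⊤ : Submodule R (C (i + 1)))) (γt i x)
          = γ i (Submodule.mkQ (RingHom.ker ε • (⊤ : Submodule R (C i))) x)) ∧
      -- `f = dγ̃ + γ̃d` induces the identity on the quotient complex (`ε(f) = id`)
      (∀ (i : ℤ) (x : C (i + 1)),
        Submodule.mkQ (RingHom.ker ε • (⊤ : Submodule R (C (i + 1))))
            (d (i + 1) (γt (i + 1) x) + γt i (d i x))
          = Submodule.mkQ (RingHom.ker ε • (⊤ : Submodule R (C (i + 1)))) x) ∧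
      -- `f = dγ̃ + γ̃d` is a chain map: `d ∘ f = f ∘ d`
      (∀ (i : ℤ) (x : C (i + 1 + 1)),
        d (i + 1) (d (i + 1 + 1) (γt (i + 1 + 1) x) + γt (i + 1) (d (i + 1) x))
          = d (i + 1) (γt (i + 1) (d (i + 1) x)) + γt i (d i (d (i + 1) x))) := by
  have hlift : ∀ i : ℤ, ∃ h : C i →ₗ[R] C (i + 1),
      (Submodule.mkQ (RingHom.ker ε • (⊤ : Submodule R (C (i + 1))))).comp h
        = (γ i).comp (Submodule.mkQ (RingHom.ker ε • (⊤ : Submodule R (C i)))) := fun i =>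
    Module.projective_lifting_property _ _ (Submodule.mkQ_surjective _)
  choose γt hγt using hlift
  refine ⟨γt, fun i x => LinearMap.congr_fun (hγt i) x, ?_, ?_⟩
  · intro i x
    have h1 : Submodule.mkQ _ (γt (i+1) x) = γ (i+1) (Submodule.mkQ _ x) :=
      LinearMap.congr_fun (hγt (i+1)) x
    have h2 : Submodule.mkQ _ (γt i (d i x)) = γ i (Submodule.mkQ _ (d i x)) :=
      LinearMap.congr_fun (hγt i) (d i x)
    have e1 : Submodule.mkQ (RingHom.ker ε • (⊤ : Submodule R (C (i + 1))))
        (d (i + 1) (γt (i + 1) x))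
        = (Submodule.mapQ _ _ (d (i + 1))
            (ideal_smul_top_le_comap (RingHom.ker ε) (d (i + 1))))
          (γ (i + 1) (Submodule.mkQ _ x)) := by
      rw [← h1]; simp [Submodule.mkQ_apply, Submodule.mapQ_apply]
    have e2 : Submodule.mkQ (RingHom.ker ε • (⊤ : Submodule R (C i))) (d i x)
        = (Submodule.mapQ _ _ (d i) (ideal_smul_top_le_comap (RingHom.ker ε) (d i)))
          (Submodule.mkQ _ x) := by
      simp [Submodule.mkQ_apply, Submodule.mapQ_apply]
    rw [map_add, e1, h2, e2, hγ]
  · intro i x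
    have h0 : d (i + 1) (d (i + 1 + 1) (γt (i + 1 + 1) x)) = 0 := by
      have := congrFun (congrArg DFunLike.coe (hdd (i + 1))) (γt (i + 1 + 1) x)
      simpa using this
    have h0' : d i (d (i + 1) x) = 0 := by
      have := congrFun (congrArg DFunLike.coe (hdd i)) x
      simpa using this
    rw [map_add, h0, h0', map_zero, zero_add, add_zero]
end
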